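/- Every regular perfect fluid solution with non-decreasing equation of state obeys the complete Buchdahl inequality 2m(r)/r ≤ (4/9)·(1 − 6π r² p(r) + √(1 + 6π r² p(r))) for all r ∈ (0,R). -/

import Mathlib

/-!
Following Buchdahl, consider `φ(t) = 2t³√(1 - 2m/t) / (m + 4πt³p)`. Along a solution of the TOV
equations, `φ' = 2t/√(1 - 2m/t) + 2t²√(1 - 2m/t)(3m - 4πt³ρ)/(m + 4πt³p)²`. The pressure decreases,
so for a non-decreasing equation of state the density does too; hence `4πt³ρ(t) ≤ 3m(t)`, the last
term is non-negative, and the mean density `m(t)/t³` is non-increasing. Fixing `r` and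
`w = m(r)/r³`, this gives `φ' ≥ 2t/√(1 - 2wt²)` on `(0, r]`, the derivative of
`G(t) = (1 - √(1 - 2wt²))/w`. As `φ > 0` and `G(0) = 0`, integration yields `G(r) ≤ φ(r)`. With
`Y = √(1 - 2m(r)/r)` this says `m + 4πr³p ≤ Y(3m + 4πr³p)`, a quadratic inequality whose solution
is the complete Buchdahl bound.
-/

open Real Set Filter Topology

theorem monotoneOn_of_hasDerivAt_nonneg {s : Set ℝ} (hs : Convex ℝ s) {f f' : ℝ → ℝ}
    (hf : ∀ x ∈ s, HasDerivAt f (f' x) x) (hf' : ∀ x ∈ s, 0 ≤ f' x) : MonotoneOn f s :=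
  monotoneOn_of_hasDerivWithinAt_nonneg hs (fun x hx => (hf x hx).continuousAt.continuousWithinAt)
    (fun x hx => (hf x (interior_subset hx)).hasDerivWithinAt) fun x hx => hf' x (interior_subset hx)

theorem antitoneOn_of_hasDerivAt_nonpos {s : Set ℝ} (hs : Convex ℝ s) {f f' : ℝ → ℝ}
    (hf : ∀ x ∈ s, HasDerivAt f (f' x) x) (hf' : ∀ x ∈ s, f' x ≤ 0) : AntitoneOn f s :=
  antitoneOn_of_hasDerivWithinAt_nonpos hs (fun x hx => (hf x hx).continuousAt.continuousWithinAt)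
    (fun x hx => (hf x (interior_subset hx)).hasDerivWithinAt) fun x hx => hf' x (interior_subset hx)

noncomputable def tovPressureGradient (ρ P M r : ℝ) : ℝ :=
  -((ρ + P) * (M + 4 * π * r ^ 3 * P)) / (r * (r - 2 * M))

theorem tovPressureGradient_eq {ρ P M r : ℝ} (hρ : ρ ≠ 0) (hM : M ≠ 0) :
    -(ρ * M / r ^ 2) * (1 + P / ρ) * (1 + 4 * π * r ^ 3 * P / M) * (1 - 2 * M / r)⁻¹ =
      tovPressureGradient ρ P M r := by
  rcases eq_or_ne r 0 with rfl | hr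
  · simp [tovPressureGradient]
  rcases eq_or_ne (r - 2 * M) 0 with h | h
  · have : 1 - 2 * M / r = 0 := by field_simp; linarith
    simp [tovPressureGradient, h, this]
  unfold tovPressureGradient
  field_simp

theorem tovPressureGradient_neg {ρ P M r : ℝ} (hρ : 0 < ρ) (hP : 0 ≤ P) (hM : 0 < M)
    (hr : 0 < r) (h2M : 2 * M < r) : tovPressureGradient ρ P M r < 0 := by
  have : 0 < r - 2 * M := by linarith
  unfold tovPressureGradient
  rw [neg_div, neg_lt_zero]
  positivity

theorem le_mass_of_le_density {m ρ : ℝ → ℝ} {r c : ℝ} (hr : 0 ≤ r)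
    (hm : ContinuousOn m (Icc 0 r)) (hm0 : m 0 = 0)
    (hm' : ∀ t ∈ Ioo 0 r, HasDerivAt m (4 * π * t ^ 2 * ρ t) t) (hρ : ∀ t ∈ Ioo 0 r, c ≤ ρ t) :
    4 * π / 3 * c * r ^ 3 ≤ m r := by
  have hmono : MonotoneOn (fun t => m t - 4 * π / 3 * c * t ^ 3) (Icc 0 r) := by
    refine monotoneOn_of_hasDerivWithinAt_nonneg (f' := fun t => 4 * π * t ^ 2 * (ρ t - c))
      (convex_Icc 0 r) (by fun_prop) (fun t ht => ?_) fun t ht => ?_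
    all_goals rw [interior_Icc] at ht
    · refine (((hm' t ht).sub ((hasDerivAt_pow 3 t).const_mul _)).congr_deriv ?_).hasDerivWithinAt
      norm_num
      ring
    · exact mul_nonneg (by positivity) (sub_nonneg.2 (hρ t ht))
  simpa [hm0] using hmono (left_mem_Icc.2 hr) (right_mem_Icc.2 hr) hr

theorem antitoneOn_mass_div_cube {m ρ : ℝ → ℝ} {s : Set ℝ} (hs : Convex ℝ s) (hs0 : s ⊆ Ioi 0)
    (hm : ∀ t ∈ s, HasDerivAt m (4 * π * t ^ 2 * ρ t) t)
    (hdens : ∀ t ∈ s, 4 * π * t ^ 3 * ρ t ≤ 3 * m t) :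
    AntitoneOn (fun t => m t / t ^ 3) s := by
  refine antitoneOn_of_hasDerivAt_nonpos hs
    (fun t ht => (hm t ht).fun_div (hasDerivAt_pow 3 t) (pow_ne_zero 3 (hs0 ht).ne')) fun t ht => ?_
  have ht0 : 0 < t := hs0 ht
  have := mul_le_mul_of_nonneg_left (hdens t ht) (sq_nonneg t)
  apply div_nonpos_of_nonpos_of_nonneg _ (sq_nonneg _)
  norm_num
  linarith

noncomputable def buchdahlPhi (m p : ℝ → ℝ) (t : ℝ) : ℝ :=
  2 * t ^ 3 * √(1 - 2 * m t / t) / (m t + 4 * π * t ^ 3 * p t)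

theorem hasDerivAt_buchdahlPhi {m p : ℝ → ℝ} {t ρ : ℝ} (ht : 0 < t) (h2m : 2 * m t < t)
    (hN : m t + 4 * π * t ^ 3 * p t ≠ 0)
    (hm : HasDerivAt m (4 * π * t ^ 2 * ρ) t)
    (hp : HasDerivAt p (tovPressureGradient ρ (p t) (m t) t) t) :
    HasDerivAt (buchdahlPhi m p) (2 * t / √(1 - 2 * m t / t) +
      2 * t ^ 2 * √(1 - 2 * m t / t) * (3 * m t - 4 * π * t ^ 3 * ρ) /
        (m t + 4 * π * t ^ 3 * p t) ^ 2) t := by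
  have hu : 0 < 1 - 2 * m t / t := by rw [sub_pos, div_lt_one ht]; exact h2m
  have hY := (((hm.const_mul 2).fun_div (hasDerivAt_id t) ht.ne').const_sub 1).sqrt hu.ne'
  have hφ : HasDerivAt (buchdahlPhi m p) _ t := (((hasDerivAt_pow 3 t).const_mul 2).fun_mul hY).fun_div
    (hm.fun_add (((hasDerivAt_pow 3 t).const_mul (4 * π)).fun_mul hp)) hN
  refine hφ.congr_deriv ?_
  -- in terms of `Y = √(1 - 2m/t)`, i.e. `m = t(1 - Y²)/2`, the identity becomes rational
  obtain ⟨Y, hYdef⟩ : ∃ Y, Y = √(1 - 2 * m t / t) := ⟨_, rfl⟩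
  have hY0 : 0 < Y := hYdef ▸ sqrt_pos.2 hu
  have hmY : m t = t * (1 - Y ^ 2) / 2 := by rw [hYdef, sq_sqrt hu.le]; field_simp; ring
  simp only [id, tovPressureGradient, show t - 2 * m t = t * Y ^ 2 by rw [hmY]; ring]
  rw [← hYdef]
  set N := m t + 4 * π * t ^ 3 * p t with hNdef
  field_simp
  rw [hNdef, hmY]
  ring

noncomputable def buchdahlG (w t : ℝ) : ℝ := (1 - √(1 - 2 * w * t ^ 2)) / w

theorem hasDerivAt_buchdahlG {w t : ℝ} (hw : w ≠ 0) (ht : 1 - 2 * w * t ^ 2 ≠ 0) :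
    HasDerivAt (buchdahlG w) (2 * t / √(1 - 2 * w * t ^ 2)) t := by
  have h := ((((hasDerivAt_pow 2 t).const_mul (2 * w)).const_sub 1).sqrt ht).const_sub 1
  refine (h.div_const w).congr_deriv ?_
  field_simp
  ring

theorem continuous_buchdahlG (w : ℝ) : Continuous (buchdahlG w) := by
  unfold buchdahlG; fun_prop

theorem buchdahlG_zero (w : ℝ) : buchdahlG w 0 = 0 := by simp [buchdahlG]

theorem buchdahlG_le_buchdahlPhi {m p ρ : ℝ → ℝ} {r : ℝ} (hr : 0 < r)
    (hm_pos : ∀ t ∈ Ioc 0 r, 0 < m t) (hp_nonneg : ∀ t ∈ Ioc 0 r, 0 ≤ p t)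
    (h2m : ∀ t ∈ Ioc 0 r, 2 * m t < t)
    (hm : ∀ t ∈ Ioc 0 r, HasDerivAt m (4 * π * t ^ 2 * ρ t) t)
    (hp : ∀ t ∈ Ioc 0 r, HasDerivAt p (tovPressureGradient (ρ t) (p t) (m t) t) t)
    (hdens : ∀ t ∈ Ioc 0 r, 4 * π * t ^ 3 * ρ t ≤ 3 * m t) :
    buchdahlG (m r / r ^ 3) r ≤ buchdahlPhi m p r := by
  set w := m r / r ^ 3
  have hw : 0 < w := div_pos (hm_pos r (right_mem_Ioc.2 hr)) (pow_pos hr 3)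
  have hN : ∀ t ∈ Ioc 0 r, 0 < m t + 4 * π * t ^ 3 * p t := fun t ht => by
    have := hm_pos t ht; have := hp_nonneg t ht; have := ht.1; positivity
  have hmean : ∀ t ∈ Ioc 0 r, 2 * w * t ^ 2 ≤ 2 * m t / t := fun t ht => by
    have := antitoneOn_mass_div_cube (convex_Ioc 0 r) Ioc_subset_Ioi_self hm hdens ht
      (right_mem_Ioc.2 hr) ht.2
    have ht0 := ht.1
    calc 2 * w * t ^ 2 ≤ 2 * (m t / t ^ 3) * t ^ 2 := by gcongr
      _ = 2 * m t / t := by field_simp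
  have hsqrt : ∀ t ∈ Ioc 0 r, √(1 - 2 * m t / t) ≤ √(1 - 2 * w * t ^ 2) := fun t ht =>
    sqrt_le_sqrt (by linarith [hmean t ht])
  have hu : ∀ t ∈ Ioc 0 r, 0 < 1 - 2 * m t / t := fun t ht => by
    rw [sub_pos, div_lt_one ht.1]; exact h2m t ht
  have hmono : MonotoneOn (fun t => buchdahlPhi m p t - buchdahlG w t) (Ioc 0 r) := by
    refine monotoneOn_of_hasDerivAt_nonneg (convex_Ioc 0 r) (fun t ht =>
      (hasDerivAt_buchdahlPhi ht.1 (h2m t ht) (hN t ht).ne' (hm t ht) (hp t ht)).sub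
        (hasDerivAt_buchdahlG hw.ne' (by linarith [hmean t ht, hu t ht]))) fun t ht => ?_
    have hcorr : 0 ≤ 2 * t ^ 2 * √(1 - 2 * m t / t) * (3 * m t - 4 * π * t ^ 3 * ρ t) /
        (m t + 4 * π * t ^ 3 * p t) ^ 2 := by
      have := sub_nonneg.2 (hdens t ht); have := ht.1; positivity
    have := div_le_div_of_nonneg_left (by linarith [ht.1] : 0 ≤ 2 * t) (sqrt_pos.2 (hu t ht))
      (hsqrt t ht)
    linarith
  have hφ_pos : ∀ t ∈ Ioc 0 r, 0 < buchdahlPhi m p t := fun t ht => by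
    have := sqrt_pos.2 (hu t ht); have := hN t ht; have := ht.1
    unfold buchdahlPhi; positivity
  have hG : Tendsto (buchdahlG w) (𝓝[>] 0) (𝓝 0) := by
    simpa [buchdahlG_zero] using
      ((continuous_buchdahlG w).tendsto 0).mono_left (nhdsWithin_le_nhds (s := Ioi 0))
  have := ge_of_tendsto hG (eventually_of_mem (Ioc_mem_nhdsGT hr) fun t ht => by
    linarith [hmono ht (right_mem_Ioc.2 hr) ht.2, hφ_pos t ht] :
      ∀ᶠ t in 𝓝[>] 0, buchdahlG w r - buchdahlPhi m p r ≤ buchdahlG w t)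
  linarith

theorem le_buchdahl_bound_of_le {u x Y : ℝ} (hu : 0 < u) (hx : 0 ≤ x) (hY : Y ^ 2 = 1 - u)
    (h : 3 * u + 4 * x ≤ Y * (9 * u + 4 * x)) : u ≤ 4 / 9 * (1 - x + √(1 + x)) := by
  have hsq : (3 * u + 4 * x) ^ 2 ≤ (1 - u) * (9 * u + 4 * x) ^ 2 := by
    rw [← hY, ← mul_pow]; exact pow_le_pow_left₀ (by positivity) h 2
  -- `(9u + 4x)² - (3u + 4x)² = u (72u + 48x)`
  have h72 : (9 * u + 4 * x) ^ 2 ≤ 72 * u + 48 * x :=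
    le_of_mul_le_mul_left (by linear_combination hsq) hu
  have : (9 * u + 4 * x - 4) ^ 2 ≤ 4 ^ 2 * (1 + x) := by linear_combination h72
  have := (le_abs_self _).trans (abs_le_sqrt this)
  rw [sqrt_mul' _ (by positivity), sqrt_sq (by norm_num)] at this
  linarith

theorem buchdahl_bound_of_buchdahlG_le {m p : ℝ → ℝ} {r : ℝ} (hr : 0 < r) (hm : 0 < m r)
    (hp : 0 ≤ p r) (h2m : 2 * m r < r) (h : buchdahlG (m r / r ^ 3) r ≤ buchdahlPhi m p r) :
    2 * m r / r ≤ 4 / 9 * (1 - 6 * π * r ^ 2 * p r + √(1 + 6 * π * r ^ 2 * p r)) := by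
  have hu : 0 < 1 - 2 * m r / r := by rw [sub_pos, div_lt_one hr]; exact h2m
  set Y := √(1 - 2 * m r / r)
  have hN : 0 < m r + 4 * π * r ^ 3 * p r := by positivity
  refine le_buchdahl_bound_of_le (by positivity) (by positivity) (sq_sqrt hu.le) ?_
  unfold buchdahlG buchdahlPhi at h
  rw [show 1 - 2 * (m r / r ^ 3) * r ^ 2 = 1 - 2 * m r / r by field_simp,
    div_le_div_iff₀ (by positivity) hN,
    show 2 * r ^ 3 * Y * (m r / r ^ 3) = 2 * m r * Y by field_simp] at h
  calc 3 * (2 * m r / r) + 4 * (6 * π * r ^ 2 * p r) = 6 / r * (m r + 4 * π * r ^ 3 * p r) := by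
        field_simp; ring
    _ ≤ 6 / r * (Y * (3 * m r + 4 * π * r ^ 3 * p r)) := by gcongr; linarith
    _ = Y * (9 * (2 * m r / r) + 4 * (6 * π * r ^ 2 * p r)) := by field_simp; ring

theorem complete_buchdahl_inequality_general
    (R : ℝ)
    (f : ℝ → ℝ)
    (hf_mono : MonotoneOn f (Set.Ici 0))
    (hf_pos : ∀ q : ℝ, 0 < q → 0 < f q)
    (m p : ℝ → ℝ)
    (hm_cont : ContinuousOn m (Set.Icc 0 R))
    (hm0 : m 0 = 0)
    (hm_pos : ∀ r ∈ Set.Ioo 0 R, 0 < m r)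
    (h2m : ∀ r ∈ Set.Ioo 0 R, 2 * m r < r)
    (hp_pos : ∀ r ∈ Set.Ico 0 R, 0 < p r)
    (hTOV_m : ∀ r ∈ Set.Ioo 0 R,
      HasDerivAt m (4 * Real.pi * r ^ 2 * f (p r)) r)
    (hTOV_p : ∀ r ∈ Set.Ioo 0 R,
      HasDerivAt p (-(f (p r) * m r / r ^ 2) * (1 + p r / f (p r)) *
        (1 + 4 * Real.pi * r ^ 3 * p r / m r) * (1 - 2 * m r / r)⁻¹) r) :
    ∀ r ∈ Set.Ioo 0 R,
      2 * m r / r ≤ 4 / 9 * (1 - 6 * Real.pi * r ^ 2 * p r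
        + Real.sqrt (1 + 6 * Real.pi * r ^ 2 * p r)) := by
  have hp_pos' : ∀ t ∈ Ioo 0 R, 0 < p t := fun t ht => hp_pos t (Ioo_subset_Ico_self ht)
  have hρ_pos : ∀ t ∈ Ioo 0 R, 0 < f (p t) := fun t ht => hf_pos _ (hp_pos' t ht)
  have hp' : ∀ t ∈ Ioo 0 R, HasDerivAt p (tovPressureGradient (f (p t)) (p t) (m t) t) t :=
    fun t ht => by
      rw [← tovPressureGradient_eq (hρ_pos t ht).ne' (hm_pos t ht).ne']; exact hTOV_p t ht
  have hp_anti : AntitoneOn p (Ioo 0 R) :=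
    antitoneOn_of_hasDerivAt_nonpos (convex_Ioo 0 R) hp' fun t ht => (tovPressureGradient_neg
      (hρ_pos t ht) (hp_pos' t ht).le (hm_pos t ht) ht.1 (h2m t ht)).le
  have hdens : ∀ t ∈ Ioo 0 R, 4 * π * t ^ 3 * f (p t) ≤ 3 * m t := fun t ht => by
    have := le_mass_of_le_density ht.1.le (hm_cont.mono (Icc_subset_Icc_right ht.2.le)) hm0
      (fun s hs => hTOV_m s ⟨hs.1, hs.2.trans ht.2⟩) fun s hs =>
        have hs' : s ∈ Ioo 0 R := ⟨hs.1, hs.2.trans ht.2⟩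
        hf_mono (hp_pos' t ht).le (hp_pos' s hs').le (hp_anti hs' ht hs.2.le)
    linarith
  intro r hr
  have hsub : Ioc 0 r ⊆ Ioo 0 R := Ioc_subset_Ioo_right hr.2
  exact buchdahl_bound_of_buchdahlG_le hr.1 (hm_pos r hr) (hp_pos' r hr).le (h2m r hr) <|
    buchdahlG_le_buchdahlPhi hr.1 (fun t ht => hm_pos t (hsub ht))
      (fun t ht => (hp_pos' t (hsub ht)).le) (fun t ht => h2m t (hsub ht))
      (fun t ht => hTOV_m t (hsub ht)) (fun t ht => hp' t (hsub ht)) fun t ht => hdens t (hsub ht)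

/-- **The complete Buchdahl inequality.**
Every regular perfect fluid solution (units `G = c = 1`) with a non-decreasing equation of
state `ρ = f(p)` obeys
`2m(r)/r ≤ (4/9)(1 − 6π r² p(r) + √(1 + 6π r² p(r)))` for all `r ∈ (0,R)`. -/
theorem complete_buchdahl_inequality
    (R : ℝ) (hR : 0 < R)
    (f : ℝ → ℝ)
    (hf_nonneg : ∀ q : ℝ, 0 ≤ q → 0 ≤ f q)
    (hf_mono : MonotoneOn f (Set.Ici 0))
    (hf_cont : ContinuousOn f (Set.Ici 0))
    (hf_pos : ∀ q : ℝ, 0 < q → 0 < f q)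
    (m p : ℝ → ℝ)
    (hm_cont : ContinuousOn m (Set.Icc 0 R))
    (hp_cont : ContinuousOn p (Set.Icc 0 R))
    (hm0 : m 0 = 0)
    (hm_pos : ∀ r ∈ Set.Ioo 0 R, 0 < m r)
    (h2m : ∀ r ∈ Set.Ioo 0 R, 2 * m r < r)
    (hp_pos : ∀ r ∈ Set.Ico 0 R, 0 < p r)
    (hpR : p R = 0)
    (hTOV_m : ∀ r ∈ Set.Ioo 0 R,
      HasDerivAt m (4 * Real.pi * r ^ 2 * f (p r)) r)
    (hTOV_p : ∀ r ∈ Set.Ioo 0 R,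
      HasDerivAt p (-(f (p r) * m r / r ^ 2) * (1 + p r / f (p r)) *
        (1 + 4 * Real.pi * r ^ 3 * p r / m r) * (1 - 2 * m r / r)⁻¹) r)
    (hreg : Filter.Tendsto (fun r => m r / r ^ 3) (nhdsWithin 0 (Set.Ioi 0))
      (nhds (4 * Real.pi / 3 * f (p 0)))) :
    ∀ r ∈ Set.Ioo 0 R,
      2 * m r / r ≤ 4 / 9 * (1 - 6 * Real.pi * r ^ 2 * p r
        + Real.sqrt (1 + 6 * Real.pi * r ^ 2 * p r)) :=
  complete_buchdahl_inequality_general R f hf_mono hf_pos m p hm_cont hm0 hm_pos h2m hp_pos hTOV_m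
    hTOV_p
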